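/- arXiv:2102.11818 — 2 statements merged into one kernel-verified Lean document; each statement's English description precedes it below -/
import Mathlib

section
/- In the group P = ⟨a, b | b⁻¹a²b = a⁻², a⁻¹b²a = b⁻²⟩ with x = a², y = b², z = abab, the subgroup generated by x, y, z is normal in P, and the quotient P/⟨x, y, z⟩ is isomorphic to ℤ/2 × ℤ/2. -/
def promislowRels : Set (FreeGroup (Fin 2)) :=
  {(FreeGroup.of 1)⁻¹ * (FreeGroup.of 0) ^ 2 * FreeGroup.of 1 * (FreeGroup.of 0) ^ 2,
   (FreeGroup.of 0)⁻¹ * (FreeGroup.of 1) ^ 2 * FreeGroup.of 0 * (FreeGroup.of 1) ^ 2}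

abbrev P := PresentedGroup promislowRels

def pa : P := PresentedGroup.of 0
def pb : P := PresentedGroup.of 1

lemma rel1 : pb⁻¹ * pa ^ 2 * pb * pa ^ 2 = 1 := by
  have h : ((FreeGroup.of 1)⁻¹ * (FreeGroup.of 0) ^ 2 * FreeGroup.of 1 * (FreeGroup.of 0) ^ 2 : FreeGroup (Fin 2)) ∈ Subgroup.normalClosure promislowRels :=
    Subgroup.subset_normalClosure (Set.mem_insert _ _)
  have := (QuotientGroup.eq_one_iff (N := Subgroup.normalClosure promislowRels) _).2 h
  exact this

lemma rel2 : pa⁻¹ * pb ^ 2 * pa * pb ^ 2 = 1 := by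
  have h : ((FreeGroup.of 0)⁻¹ * (FreeGroup.of 1) ^ 2 * FreeGroup.of 0 * (FreeGroup.of 1) ^ 2 : FreeGroup (Fin 2)) ∈ Subgroup.normalClosure promislowRels :=
    Subgroup.subset_normalClosure (Set.mem_insert_of_mem _ rfl)
  have := (QuotientGroup.eq_one_iff (N := Subgroup.normalClosure promislowRels) _).2 h
  exact this

-- conjugation facts
lemma F2 : pb⁻¹ * pa ^ 2 * pb = (pa ^ 2)⁻¹ := mul_eq_one_iff_eq_inv.mp rel1

lemma F4 : pa⁻¹ * pb ^ 2 * pa = (pb ^ 2)⁻¹ := mul_eq_one_iff_eq_inv.mp rel2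

lemma F1 : pb * pa ^ 2 * pb⁻¹ = (pa ^ 2)⁻¹ := by
  rw [← mul_inv_eq_one]
  calc pb * pa ^ 2 * pb⁻¹ * ((pa ^ 2)⁻¹)⁻¹
      = pb * (pa ^ 2 * (pb⁻¹ * pa ^ 2 * pb)) * pb⁻¹ := by group <;> simp [pow_two, zpow_two, mul_assoc]
    _ = 1 := by rw [F2]; group

lemma F3 : pa * pb ^ 2 * pa⁻¹ = (pb ^ 2)⁻¹ := by
  rw [← mul_inv_eq_one]
  calc pa * pb ^ 2 * pa⁻¹ * ((pb ^ 2)⁻¹)⁻¹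
      = pa * (pb ^ 2 * (pa⁻¹ * pb ^ 2 * pa)) * pa⁻¹ := by group <;> simp [pow_two, zpow_two, mul_assoc]
    _ = 1 := by rw [F4]; group

-- swap lemmas
lemma s1 : pb ^ 2 * pa = pa * (pb ^ 2)⁻¹ := by
  calc pb ^ 2 * pa = pa * (pa⁻¹ * pb ^ 2 * pa) := by group <;> simp [pow_two, zpow_two, mul_assoc]
    _ = pa * (pb ^ 2)⁻¹ := by rw [F4]

lemma sv' : pb ^ 2 * pa⁻¹ = pa⁻¹ * (pb ^ 2)⁻¹ := by
  calc pb ^ 2 * pa⁻¹ = pa⁻¹ * (pa * pb ^ 2 * pa⁻¹) := by group <;> simp [pow_two, zpow_two, mul_assoc]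
    _ = pa⁻¹ * (pb ^ 2)⁻¹ := by rw [F3]

lemma su : pa ^ 2 * pb = pb * (pa ^ 2)⁻¹ := by
  calc pa ^ 2 * pb = pb * (pb⁻¹ * pa ^ 2 * pb) := by group <;> simp [pow_two, zpow_two, mul_assoc]
    _ = pb * (pa ^ 2)⁻¹ := by rw [F2]

lemma su2 : pa ^ 2 * pb⁻¹ = pb⁻¹ * (pa ^ 2)⁻¹ := by
  calc pa ^ 2 * pb⁻¹ = pb⁻¹ * (pb * pa ^ 2 * pb⁻¹) := by group <;> simp [pow_two, zpow_two, mul_assoc]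
    _ = pb⁻¹ * (pa ^ 2)⁻¹ := by rw [F1]

lemma F5 : pa * (pa * pb * pa * pb) * pa⁻¹ = (pa * pb * pa * pb)⁻¹ := by
  rw [← mul_inv_eq_one]
  calc pa * (pa * pb * pa * pb) * pa⁻¹ * ((pa * pb * pa * pb)⁻¹)⁻¹
      = (pa ^ 2 * pb * pa) * (pb ^ 2 * pa) * pb := by group <;> simp [pow_two, zpow_two, mul_assoc]
    _ = (pa ^ 2 * pb * pa) * (pa * (pb ^ 2)⁻¹) * pb := by rw [s1]
    _ = pa ^ 2 * (pb * pa ^ 2 * pb⁻¹) := by group <;> simp [pow_two, zpow_two, mul_assoc]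
    _ = pa ^ 2 * (pa ^ 2)⁻¹ := by rw [F1]
    _ = 1 := by group <;> simp [pow_two, zpow_two, mul_assoc]

lemma F6 : pa⁻¹ * (pa * pb * pa * pb) * pa = (pa * pb * pa * pb)⁻¹ := by
  rw [← mul_inv_eq_one]
  calc pa⁻¹ * (pa * pb * pa * pb) * pa * ((pa * pb * pa * pb)⁻¹)⁻¹
      = (pb * pa * pb) * (pa ^ 2 * pb) * (pa * pb) := by group <;> simp [pow_two, zpow_two, mul_assoc]
    _ = (pb * pa * pb) * (pb * (pa ^ 2)⁻¹) * (pa * pb) := by rw [su]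
    _ = (pb * pa) * (pb ^ 2 * pa⁻¹) * pb := by group <;> simp [pow_two, zpow_two, mul_assoc]
    _ = (pb * pa) * (pa⁻¹ * (pb ^ 2)⁻¹) * pb := by rw [sv']
    _ = 1 := by group <;> simp [pow_two, zpow_two, mul_assoc]

lemma F7 : pb * (pa * pb * pa * pb) * pb⁻¹ = (pa * pb * pa * pb)⁻¹ := by
  rw [← mul_inv_eq_one]
  calc pb * (pa * pb * pa * pb) * pb⁻¹ * ((pa * pb * pa * pb)⁻¹)⁻¹
      = (pb * pa * pb) * (pa ^ 2 * pb) * (pa * pb) := by group <;> simp [pow_two, zpow_two, mul_assoc]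
    _ = (pb * pa * pb) * (pb * (pa ^ 2)⁻¹) * (pa * pb) := by rw [su]
    _ = (pb * pa) * (pb ^ 2 * pa⁻¹) * pb := by group <;> simp [pow_two, zpow_two, mul_assoc]
    _ = (pb * pa) * (pa⁻¹ * (pb ^ 2)⁻¹) * pb := by rw [sv']
    _ = 1 := by group <;> simp [pow_two, zpow_two, mul_assoc]

lemma F8 : pb⁻¹ * (pa * pb * pa * pb) * pb = (pa * pb * pa * pb)⁻¹ := by
  rw [← mul_inv_eq_one]
  calc pb⁻¹ * (pa * pb * pa * pb) * pb * ((pa * pb * pa * pb)⁻¹)⁻¹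
      = (pb⁻¹ * pa * pb * pa) * (pb ^ 2 * pa) * (pb * pa * pb) := by group <;> simp [pow_two, zpow_two, mul_assoc]
    _ = (pb⁻¹ * pa * pb * pa) * (pa * (pb ^ 2)⁻¹) * (pb * pa * pb) := by rw [s1]
    _ = (pb⁻¹ * pa * pb) * (pa ^ 2 * pb⁻¹) * (pa * pb) := by group <;> simp [pow_two, zpow_two, mul_assoc]
    _ = (pb⁻¹ * pa * pb) * (pb⁻¹ * (pa ^ 2)⁻¹) * (pa * pb) := by rw [su2]
    _ = 1 := by group <;> simp [pow_two, zpow_two, mul_assoc]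

def Nsub : Subgroup P := Subgroup.closure {pa ^ 2, pb ^ 2, pa * pb * pa * pb}

lemma hxN : pa ^ 2 ∈ Nsub := Subgroup.subset_closure (Set.mem_insert _ _)
lemma hyN : pb ^ 2 ∈ Nsub := Subgroup.subset_closure (Set.mem_insert_of_mem _ (Set.mem_insert _ _))
lemma hzN : pa * pb * pa * pb ∈ Nsub :=
  Subgroup.subset_closure (Set.mem_insert_of_mem _ (Set.mem_insert_of_mem _ rfl))

lemma conj_mem_N (g : P) (h1 : g * pa ^ 2 * g⁻¹ ∈ Nsub) (h2 : g * pb ^ 2 * g⁻¹ ∈ Nsub)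
    (h3 : g * (pa * pb * pa * pb) * g⁻¹ ∈ Nsub) :
    ∀ n ∈ Nsub, g * n * g⁻¹ ∈ Nsub := by
  intro n hn
  refine Subgroup.closure_induction (p := fun x _ => g * x * g⁻¹ ∈ Nsub) ?_ ?_ ?_ ?_ hn
  · rintro x hx
    simp only [Set.mem_insert_iff, Set.mem_singleton_iff] at hx
    rcases hx with rfl | rfl | rfl
    · exact h1
    · exact h2
    · exact h3
  · simpa using Nsub.one_mem
  · intro x y _ _ hgx hgy
    have e : g * (x * y) * g⁻¹ = (g * x * g⁻¹) * (g * y * g⁻¹) := by group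
    rw [e]; exact Nsub.mul_mem hgx hgy
  · intro x _ hgx
    have e : g * x⁻¹ * g⁻¹ = (g * x * g⁻¹)⁻¹ := by group
    rw [e]; exact Nsub.inv_mem hgx

lemma conj_pa : ∀ n ∈ Nsub, pa * n * pa⁻¹ ∈ Nsub := by
  refine conj_mem_N pa ?_ ?_ ?_
  · have e : pa * pa ^ 2 * pa⁻¹ = pa ^ 2 := by group
    rw [e]; exact hxN
  · rw [F3]; exact Nsub.inv_mem hyN
  · rw [F5]; exact Nsub.inv_mem hzN

lemma conj_pa' : ∀ n ∈ Nsub, pa⁻¹ * n * pa ∈ Nsub := by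
  have h := conj_mem_N pa⁻¹ ?_ ?_ ?_
  · intro n hn
    have e : pa⁻¹ * n * pa = pa⁻¹ * n * pa⁻¹⁻¹ := by group
    rw [e]; exact h n hn
  · have e : pa⁻¹ * pa ^ 2 * pa⁻¹⁻¹ = pa ^ 2 := by group
    rw [e]; exact hxN
  · have e : pa⁻¹ * pb ^ 2 * pa⁻¹⁻¹ = pa⁻¹ * pb ^ 2 * pa := by group
    rw [e, F4]; exact Nsub.inv_mem hyN
  · have e : pa⁻¹ * (pa * pb * pa * pb) * pa⁻¹⁻¹ = pa⁻¹ * (pa * pb * pa * pb) * pa := by group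
    rw [e, F6]; exact Nsub.inv_mem hzN

lemma conj_pb : ∀ n ∈ Nsub, pb * n * pb⁻¹ ∈ Nsub := by
  refine conj_mem_N pb ?_ ?_ ?_
  · rw [F1]; exact Nsub.inv_mem hxN
  · have e : pb * pb ^ 2 * pb⁻¹ = pb ^ 2 := by group
    rw [e]; exact hyN
  · rw [F7]; exact Nsub.inv_mem hzN

lemma conj_pb' : ∀ n ∈ Nsub, pb⁻¹ * n * pb ∈ Nsub := by
  have h := conj_mem_N pb⁻¹ ?_ ?_ ?_
  · intro n hn
    have e : pb⁻¹ * n * pb = pb⁻¹ * n * pb⁻¹⁻¹ := by group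
    rw [e]; exact h n hn
  · have e : pb⁻¹ * pa ^ 2 * pb⁻¹⁻¹ = pb⁻¹ * pa ^ 2 * pb := by group
    rw [e, F2]; exact Nsub.inv_mem hxN
  · have e : pb⁻¹ * pb ^ 2 * pb⁻¹⁻¹ = pb ^ 2 := by group
    rw [e]; exact hyN
  · have e : pb⁻¹ * (pa * pb * pa * pb) * pb⁻¹⁻¹ = pb⁻¹ * (pa * pb * pa * pb) * pb := by group
    rw [e, F8]; exact Nsub.inv_mem hzN

lemma Nsub_normal : Nsub.Normal := by
  rw [← Subgroup.normalizer_eq_top_iff]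
  rw [eq_top_iff, ← PresentedGroup.closure_range_of promislowRels]
  rw [Subgroup.closure_le]
  rintro x ⟨i, rfl⟩
  fin_cases i
  · -- pa
    rw [SetLike.mem_coe, Subgroup.mem_normalizer_iff]
    intro h
    constructor
    · intro hh; exact conj_pa h hh
    · intro hh
      have e : h = pa⁻¹ * (pa * h * pa⁻¹) * pa := by group
      rw [e]; exact conj_pa' _ hh
  · rw [SetLike.mem_coe, Subgroup.mem_normalizer_iff]
    intro h
    constructor
    · intro hh; exact conj_pb h hh
    · intro hh
      have e : h = pb⁻¹ * (pb * h * pb⁻¹) * pb := by group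
      rw [e]; exact conj_pb' _ hh

instance : Nsub.Normal := Nsub_normal

lemma cover : ∀ g : P, (g : P ⧸ Nsub) = 1 ∨ (g : P ⧸ Nsub) = (pa : P ⧸ Nsub) ∨
    (g : P ⧸ Nsub) = (pb : P ⧸ Nsub) ∨ (g : P ⧸ Nsub) = (pa : P ⧸ Nsub) * (pb : P ⧸ Nsub) := by
  set A : P ⧸ Nsub := (pa : P ⧸ Nsub) with hA
  set B : P ⧸ Nsub := (pb : P ⧸ Nsub) with hB
  have hA2 : A * A = 1 := by
    rw [hA]
    show ((pa * pa : P) : P ⧸ Nsub) = 1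
    rw [QuotientGroup.eq_one_iff]
    rw [← pow_two]; exact hxN
  have hB2 : B * B = 1 := by
    rw [hB]
    show ((pb * pb : P) : P ⧸ Nsub) = 1
    rw [QuotientGroup.eq_one_iff]
    rw [← pow_two]; exact hyN
  have hZ : A * B * A * B = 1 := by
    rw [hA, hB]
    show ((pa * pb * pa * pb : P) : P ⧸ Nsub) = 1
    rw [QuotientGroup.eq_one_iff]
    exact hzN
  have hAi : A⁻¹ = A := inv_eq_of_mul_eq_one_right hA2
  have hBi : B⁻¹ = B := inv_eq_of_mul_eq_one_right hB2
  have hABi : (A * B)⁻¹ = A * B := by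
    refine inv_eq_of_mul_eq_one_right ?_
    calc (A * B) * (A * B) = A * B * A * B := by group
      _ = 1 := hZ
  have hBA : B * A = A * B := by
    calc B * A = B⁻¹ * A⁻¹ := by rw [hBi, hAi]
      _ = (A * B)⁻¹ := by rw [mul_inv_rev]
      _ = A * B := hABi
  intro g
  have hg : g ∈ Subgroup.closure (Set.range (PresentedGroup.of : Fin 2 → P)) := by
    rw [PresentedGroup.closure_range_of]; trivial
  refine Subgroup.closure_induction
    (k := Set.range (PresentedGroup.of : Fin 2 → P)) (p := fun (x : P) _ => (x : P ⧸ Nsub) = 1 ∨ (x : P ⧸ Nsub) = A ∨ (x : P ⧸ Nsub) = B ∨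
      (x : P ⧸ Nsub) = A * B) ?_ ?_ ?_ ?_ hg
  · rintro x ⟨i, rfl⟩
    fin_cases i
    · right; left; rfl
    · right; right; left; rfl
  · left; rfl
  · intro x y _ _ ihx ihy
    have hxy : ((x * y : P) : P ⧸ Nsub) = (x : P ⧸ Nsub) * (y : P ⧸ Nsub) := rfl
    rcases ihx with h | h | h | h <;> rcases ihy with h' | h' | h' | h' <;>
      rw [hxy, h, h']
    · left; rw [one_mul]
    · right; left; rw [one_mul]
    · right; right; left; rw [one_mul]
    · right; right; right; rw [one_mul]
    · right; left; rw [mul_one]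
    · left; exact hA2
    · right; right; right; rfl
    · right; right; left; rw [← mul_assoc, hA2, one_mul]
    · right; right; left; rw [mul_one]
    · right; right; right; exact hBA
    · left; exact hB2
    · right; left; rw [← mul_assoc, hBA, mul_assoc, hB2, mul_one]
    · right; right; right; rw [mul_one]
    · right; right; left; rw [mul_assoc, hBA, ← mul_assoc, hA2, one_mul]
    · right; left; rw [mul_assoc, hB2, mul_one]
    · left; rw [← mul_assoc]; exact hZ
  · intro x _ ihx
    have hinv : ((x⁻¹ : P) : P ⧸ Nsub) = (x : P ⧸ Nsub)⁻¹ := rfl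
    rcases ihx with h | h | h | h <;> rw [hinv, h]
    · left; exact inv_one
    · right; left; exact hAi
    · right; right; left; exact hBi
    · right; right; right; exact hABi

def ftarget : Fin 2 → Multiplicative (ZMod 2) × Multiplicative (ZMod 2) :=
  ![(Multiplicative.ofAdd 1, 1), (1, Multiplicative.ofAdd 1)]

lemma hrels : ∀ r ∈ promislowRels, FreeGroup.lift ftarget r = 1 := by
  intro r hr
  simp only [promislowRels, Set.mem_insert_iff, Set.mem_singleton_iff] at hr
  rcases hr with rfl | rfl <;>
    simp only [map_mul, map_pow, map_inv, FreeGroup.lift_apply_of, ftarget,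
      Matrix.cons_val_zero, Matrix.cons_val_one, Matrix.head_cons] <;> decide

def phi : P →* Multiplicative (ZMod 2) × Multiplicative (ZMod 2) :=
  PresentedGroup.toGroup hrels

lemma phi_pa : phi pa = (Multiplicative.ofAdd 1, 1) := by
  show phi (PresentedGroup.of 0) = _
  rw [phi, PresentedGroup.toGroup.of]
  rfl

lemma phi_pb : phi pb = (1, Multiplicative.ofAdd 1) := by
  show phi (PresentedGroup.of 1) = _
  rw [phi, PresentedGroup.toGroup.of]
  rfl

lemma N_le_ker : Nsub ≤ phi.ker := by
  rw [Nsub, Subgroup.closure_le]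
  rintro x hx
  simp only [Set.mem_insert_iff, Set.mem_singleton_iff] at hx
  rcases hx with rfl | rfl | rfl <;>
    simp only [SetLike.mem_coe, MonoidHom.mem_ker, map_mul, map_pow, phi_pa, phi_pb] <;> decide

/-- The subgroup `N = ⟨x, y, z⟩` of `P` (with `x = a²`, `y = b²`, `z = abab`) is
normal, and `P / N ≅ ℤ/2 × ℤ/2`: there is a surjective homomorphism onto
`ℤ/2 × ℤ/2` with kernel exactly `N`. -/
theorem normal_subgroup_and_quotient :
    (Subgroup.closure {pa ^ 2, pb ^ 2, pa * pb * pa * pb} : Subgroup P).Normal ∧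
    ∃ φ : P →* Multiplicative (ZMod 2) × Multiplicative (ZMod 2),
      Function.Surjective φ ∧
      φ.ker = Subgroup.closure {pa ^ 2, pb ^ 2, pa * pb * pa * pb} := by
  refine ⟨Nsub_normal, phi, ?_, ?_⟩
  · -- surjective
    intro p
    have hp : ∀ q : Multiplicative (ZMod 2) × Multiplicative (ZMod 2),
        q = 1 ∨ q = (Multiplicative.ofAdd 1, 1) ∨ q = (1, Multiplicative.ofAdd 1) ∨
        q = (Multiplicative.ofAdd 1, Multiplicative.ofAdd 1) := by decide
    rcases hp p with rfl | rfl | rfl | rfl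
    · exact ⟨1, map_one phi⟩
    · exact ⟨pa, phi_pa⟩
    · exact ⟨pb, phi_pb⟩
    · exact ⟨pa * pb, by rw [map_mul, phi_pa, phi_pb]; decide⟩
  · -- kernel
    apply le_antisymm ?_ N_le_ker
    intro g hg
    rw [MonoidHom.mem_ker] at hg
    rcases cover g with h | h | h | h
    · exact (QuotientGroup.eq_one_iff g).mp h
    · exfalso
      have h1 : ((g * pa⁻¹ : P) : P ⧸ Nsub) = 1 := by
        show (g : P ⧸ Nsub) * (pa : P ⧸ Nsub)⁻¹ = 1
        rw [h, mul_inv_cancel]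
      have hm : g * pa⁻¹ ∈ Nsub := (QuotientGroup.eq_one_iff _).mp h1
      have := N_le_ker hm
      rw [MonoidHom.mem_ker, map_mul, map_inv, hg, one_mul, inv_eq_one, phi_pa] at this
      exact absurd this (by decide)
    · exfalso
      have h1 : ((g * pb⁻¹ : P) : P ⧸ Nsub) = 1 := by
        show (g : P ⧸ Nsub) * (pb : P ⧸ Nsub)⁻¹ = 1
        rw [h, mul_inv_cancel]
      have hm : g * pb⁻¹ ∈ Nsub := (QuotientGroup.eq_one_iff _).mp h1
      have := N_le_ker hm
      rw [MonoidHom.mem_ker, map_mul, map_inv, hg, one_mul, inv_eq_one, phi_pb] at this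
      exact absurd this (by decide)
    · exfalso
      have h1 : ((g * (pa * pb)⁻¹ : P) : P ⧸ Nsub) = 1 := by
        show (g : P ⧸ Nsub) * ((pa * pb : P) : P ⧸ Nsub)⁻¹ = 1
        have : ((pa * pb : P) : P ⧸ Nsub) = (pa : P ⧸ Nsub) * (pb : P ⧸ Nsub) := rfl
        rw [this, h, mul_inv_cancel]
      have hm : g * (pa * pb)⁻¹ ∈ Nsub := (QuotientGroup.eq_one_iff _).mp h1
      have := N_le_ker hm
      rw [MonoidHom.mem_ker, map_mul, map_inv, hg, one_mul, inv_eq_one, map_mul, phi_pa, phi_pb] at this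
      exact absurd this (by decide)
end

section
/- Let R = F₂[x^{±1},y^{±1},z^{±1}] with automorphisms σ_a, σ_b, σ_{ab} inverting variables as (x,y,z)↦(x,y⁻¹,z⁻¹), (x⁻¹,y,z⁻¹), (x⁻¹,y⁻¹,z) respectively. Define p = (1+x)(1+y)(1+z⁻¹), q = x⁻¹y⁻¹+x+y⁻¹z+z, r = 1+x+y⁻¹z+xyz, s = 1+(x+x⁻¹+y+y⁻¹)z⁻¹ and p' = x⁻¹σ_a(p), q' = x⁻¹q, r' = y⁻¹r, s' = z⁻¹σ_a(s). Then the following four identities hold in R (characteristic 2): (1) p'p + x·q'·σ_a(q) + y·r'·σ_b(r) + z·s'·σ_{ab}(s) = 1; (2) p'q + q'·σ_a(p) + x⁻¹z⁻¹·r'·σ_b(s) + y⁻¹·s'·σ_{ab}(r) = 0; (3) p'r + x·q'·σ_a(s) + r'·σ_b(p) + y⁻¹z·s'·σ_{ab}(q) = 0; (4) p's + q'·σ_a(r) + x⁻¹yz⁻¹·r'·σ_b(q) + s'·σ_{ab}(p) = 0. -/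
noncomputable section

/-- The Laurent polynomial ring `R = 𝔽₂[x^{±1}, y^{±1}, z^{±1}]`, realized as the
group algebra of `ℤ³` over `𝔽₂`; the monomial `xⁱyʲzᵏ` is `M i j k`. -/
abbrev R3 := AddMonoidAlgebra (ZMod 2) (ℤ × ℤ × ℤ)

/-- The Laurent monomial `xⁱyʲzᵏ`. -/
def M (i j k : ℤ) : R3 := AddMonoidAlgebra.single (i, j, k) 1

/-- `σ_a : (x, y, z) ↦ (x, y⁻¹, z⁻¹)`. -/
def σa : R3 ≃ₐ[ZMod 2] R3 :=
  AddMonoidAlgebra.domCongr (ZMod 2) (ZMod 2)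
    ((AddEquiv.refl ℤ).prodCongr ((AddEquiv.neg ℤ).prodCongr (AddEquiv.neg ℤ)))

/-- `σ_b : (x, y, z) ↦ (x⁻¹, y, z⁻¹)`. -/
def σb : R3 ≃ₐ[ZMod 2] R3 :=
  AddMonoidAlgebra.domCongr (ZMod 2) (ZMod 2)
    ((AddEquiv.neg ℤ).prodCongr ((AddEquiv.refl ℤ).prodCongr (AddEquiv.neg ℤ)))

/-- `σ_{ab} : (x, y, z) ↦ (x⁻¹, y⁻¹, z)`. -/
def σab : R3 ≃ₐ[ZMod 2] R3 :=
  AddMonoidAlgebra.domCongr (ZMod 2) (ZMod 2)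
    ((AddEquiv.neg ℤ).prodCongr ((AddEquiv.neg ℤ).prodCongr (AddEquiv.refl ℤ)))

/-- `p = (1+x)(1+y)(1+z⁻¹)` -/
def p : R3 := (1 + M 1 0 0) * (1 + M 0 1 0) * (1 + M 0 0 (-1))
/-- `q = x⁻¹y⁻¹ + x + y⁻¹z + z` -/
def q : R3 := M (-1) (-1) 0 + M 1 0 0 + M 0 (-1) 1 + M 0 0 1
/-- `r = 1 + x + y⁻¹z + xyz` -/
def r : R3 := 1 + M 1 0 0 + M 0 (-1) 1 + M 1 1 1
/-- `s = 1 + (x + x⁻¹ + y + y⁻¹)z⁻¹` -/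
def s : R3 := 1 + (M 1 0 0 + M (-1) 0 0 + M 0 1 0 + M 0 (-1) 0) * M 0 0 (-1)

/-- `p' = x⁻¹σ_a(p)` -/
def p' : R3 := M (-1) 0 0 * σa p
/-- `q' = x⁻¹q` -/
def q' : R3 := M (-1) 0 0 * q
/-- `r' = y⁻¹r` -/
def r' : R3 := M 0 (-1) 0 * r
/-- `s' = z⁻¹σ_a(s)` -/
def s' : R3 := M 0 0 (-1) * σa s


lemma M_mul (i j k i' j' k' : ℤ) : M i j k * M i' j' k' = M (i+i') (j+j') (k+k') := by
  simp [M, AddMonoidAlgebra.single_mul_single, Prod.mk_add_mk]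

lemma one_eq : (1 : R3) = M 0 0 0 := rfl

lemma σa_M (i j k : ℤ) : σa (M i j k) = M i (-j) (-k) := by
  simp only [σa, M, AddMonoidAlgebra.domCongr_single]; rfl
lemma σb_M (i j k : ℤ) : σb (M i j k) = M (-i) j (-k) := by
  simp only [σb, M, AddMonoidAlgebra.domCongr_single]; rfl
lemma σab_M (i j k : ℤ) : σab (M i j k) = M (-i) (-j) k := by
  simp only [σab, M, AddMonoidAlgebra.domCongr_single]; rfl

lemma M_add_self (i j k : ℤ) : M i j k + M i j k = 0 := by
  simp only [M, AddMonoidAlgebra.single]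
  rw [← AddMonoidAlgebra.ofCoeff_add, ← Finsupp.single_add]
  norm_num
  rfl

lemma two_eq : (2 : R3) = 0 := by
  rw [show (2 : R3) = 1 + 1 by norm_num, one_eq, M_add_self]
lemma four_eq : (4 : R3) = 0 := by
  rw [show (4 : R3) = 2 * 2 by norm_num, two_eq, zero_mul]
lemma six_eq : (6 : R3) = 0 := by
  rw [show (6 : R3) = 2 * 3 by norm_num, two_eq, zero_mul]
lemma eight_eq : (8 : R3) = 0 := by
  rw [show (8 : R3) = 2 * 4 by norm_num, two_eq, zero_mul]
lemma ten_eq : (10 : R3) = 0 := by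
  rw [show (10 : R3) = 2 * 5 by norm_num, two_eq, zero_mul]
lemma seventeen_eq : (17 : R3) = 1 := by
  rw [show (17 : R3) = 2 * 8 + 1 by norm_num, two_eq, zero_mul, zero_add]

set_option maxHeartbeats 4000000

/-- The four component equations expressing `(p' + q'a + r'b + s'ab)(p + qa + rb + sab) = 1`
in `𝔽₂[P]` (characteristic 2, so signs are written as `+`). -/
theorem component_equations :
    p' * p + M 1 0 0 * q' * σa q + M 0 1 0 * r' * σb r + M 0 0 1 * s' * σab s = 1 ∧
    p' * q + q' * σa p + M (-1) 0 (-1) * r' * σb s + M 0 (-1) 0 * s' * σab r = 0 ∧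
    p' * r + M 1 0 0 * q' * σa s + r' * σb p + M 0 (-1) 1 * s' * σab q = 0 ∧
    p' * s + q' * σa r + M (-1) 1 (-1) * r' * σb q + s' * σab p = 0 := by
  refine ⟨?_, ?_, ?_, ?_⟩ <;>
  · simp only [p', q', r', s', p, q, r, s, one_eq, map_add, map_mul, σa_M, σb_M, σab_M,
      mul_add, add_mul, M_mul]
    norm_num
    ring_nf
    simp only [two_eq, four_eq, six_eq, eight_eq, ten_eq, seventeen_eq,
      mul_zero, mul_one, add_zero, zero_add]
end
end
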